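/- arXiv:1001.3513 — 2 statements merged into one kernel-verified Lean document; each statement's English description precedes it below -/
import Mathlib

section
/- For all n ≥ 3 and k ≥ 0, the set of prefixes of length f_n − 1 of elements of A_n equals the set of prefixes of length f_n − 1 of elements of A_{n+k}. -/
/-- Sets of inflated random Fibonacci words: A₁ = {0}, A₂ = {1},
    Aₙ = Aₙ₋₁Aₙ₋₂ ∪ Aₙ₋₂Aₙ₋₁ for n ≥ 3 (A₀ = ∅). -/
def wordSet : ℕ → Set (List Bool)
  | 0 => ∅
  | 1 => {[false]}
  | 2 => {[true]}
  | (n + 3) => Set.image2 (· ++ ·) (wordSet (n + 2)) (wordSet (n + 1)) ∪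
      Set.image2 (· ++ ·) (wordSet (n + 1)) (wordSet (n + 2))

/-- Concatenation of sets of words: UV = {uv : u ∈ U, v ∈ V}. -/
def cat (U V : Set (List Bool)) : Set (List Bool) := Set.image2 (· ++ ·) U V

/-- W[a,b]: the set of segments wₐ…w_b (1-based indexing) of words in W. -/
def seg (W : Set (List Bool)) (a b : ℕ) : Set (List Bool) :=
  (fun w => (w.drop (a - 1)).take (b - a + 1)) '' W

/-- F(S, m): the set of all contiguous factors of length m of words in S. -/
def factorSet (S : Set (List Bool)) (m : ℕ) : Set (List Bool) :=
  {x | x.length = m ∧ ∃ w ∈ S, x <:+: w}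

/-- Fₙ: the set of factors of length fₙ occurring in any inflated word. -/
def Fn (n : ℕ) : Set (List Bool) := ⋃ m ≥ 1, factorSet (wordSet m) (Nat.fib n)

/-!
Write `P m` for the claim that `A_{m+1}` and `A_m` have the same prefixes of length `f_m - 1`.
It holds for `m = 1, 2`, where these prefixes are empty, and `P (m+1)`, `P (m+2)` imply `P (m+3)`:
a word of `A_{m+4}` is `uv` with `u ∈ A_{m+3}`, whose prefix is that of `u`, or `vu` with
`v ∈ A_{m+2}`, `u ∈ A_{m+3}`, whose prefix is `v` followed by a prefix of length `f_{m+1} - 1`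
of `u`; by the two hypotheses that is also a prefix of some `w ∈ A_{m+1}`, and `vw ∈ A_{m+3}`.
Chaining `P n, P (n+1), …` and shortening prefixes gives the theorem.
-/

theorem Set.image_take_eq_of_le {α : Type*} {S T : Set (List α)} {i j : ℕ} (hij : i ≤ j)
    (h : List.take j '' S = List.take j '' T) : List.take i '' S = List.take i '' T := by
  have factor : ∀ U : Set (List α), List.take i '' U = List.take i '' (List.take j '' U) := by
    intro U
    simp only [Set.image_image, List.take_take, min_eq_left hij]
  rw [factor S, factor T, h]

theorem append_mem_wordSet_add_three {n : ℕ} {u v : List Bool} (hu : u ∈ wordSet (n + 1))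
    (hv : v ∈ wordSet (n + 2)) : v ++ u ∈ wordSet (n + 3) :=
  Or.inl ⟨v, hv, u, hu, rfl⟩

theorem wordSet_nonempty {n : ℕ} (hn : 1 ≤ n) : (wordSet n).Nonempty := by
  induction n using Nat.strong_induction_on with
  | _ n ih =>
    match n, hn with
    | 1, _ => exact ⟨[false], rfl⟩
    | 2, _ => exact ⟨[true], rfl⟩
    | n + 3, _ =>
      obtain ⟨u, hu⟩ := ih (n + 1) (by omega) (by omega)
      obtain ⟨v, hv⟩ := ih (n + 2) (by omega) (by omega)
      exact ⟨v ++ u, append_mem_wordSet_add_three hu hv⟩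

theorem length_of_mem_wordSet {n : ℕ} {w : List Bool} (hw : w ∈ wordSet n) :
    w.length = Nat.fib n := by
  induction n using Nat.strong_induction_on generalizing w with
  | _ n ih =>
    match n with
    | 1 => obtain rfl : w = [false] := hw; rfl
    | 2 => obtain rfl : w = [true] := hw; rfl
    | n + 3 =>
      have hfib : Nat.fib (n + 3) = Nat.fib (n + 1) + Nat.fib (n + 2) := Nat.fib_add_two
      rcases hw with ⟨u, hu, v, hv, rfl⟩ | ⟨u, hu, v, hv, rfl⟩ <;>
        rw [List.length_append, ih _ (by omega) hu, ih _ (by omega) hv] <;> omega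

theorem image_take_zero_wordSet {n : ℕ} (hn : 1 ≤ n) :
    List.take 0 '' wordSet n = {[]} := by
  rw [show (List.take 0 : List Bool → List Bool) = fun _ => [] from
    funext fun _ => List.take_zero]
  exact (wordSet_nonempty hn).image_const []

theorem image_take_wordSet_add_four {m : ℕ}
    (h₁ : List.take (Nat.fib (m + 1) - 1) '' wordSet (m + 2) =
      List.take (Nat.fib (m + 1) - 1) '' wordSet (m + 1))
    (h₂ : List.take (Nat.fib (m + 2) - 1) '' wordSet (m + 3) =
      List.take (Nat.fib (m + 2) - 1) '' wordSet (m + 2)) :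
    List.take (Nat.fib (m + 3) - 1) '' wordSet (m + 4) =
      List.take (Nat.fib (m + 3) - 1) '' wordSet (m + 3) := by
  have hfib : Nat.fib (m + 3) = Nat.fib (m + 1) + Nat.fib (m + 2) := Nat.fib_add_two
  have shorter : List.take (Nat.fib (m + 1) - 1) '' wordSet (m + 3) =
      List.take (Nat.fib (m + 1) - 1) '' wordSet (m + 1) :=
    (Set.image_take_eq_of_le (Nat.sub_le_sub_right (Nat.fib_mono (by omega)) 1) h₂).trans h₁
  apply Set.Subset.antisymm
  · rintro _ ⟨_, ⟨u, (hu : u ∈ wordSet (m + 3)), v, -, rfl⟩ |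
        ⟨v, (hv : v ∈ wordSet (m + 2)), u, (hu : u ∈ wordSet (m + 3)), rfl⟩, rfl⟩
    · refine ⟨u, hu, ?_⟩
      rw [List.take_append_of_le_length (by rw [length_of_mem_wordSet hu]; omega)]
    · obtain ⟨w, hw, hwu⟩ := shorter ▸ Set.mem_image_of_mem _ hu
      refine ⟨v ++ w, append_mem_wordSet_add_three hw hv, ?_⟩
      have hrest : Nat.fib (m + 3) - 1 - v.length = Nat.fib (m + 1) - 1 := by
        rw [length_of_mem_wordSet hv]; omega
      rw [List.take_append, List.take_append, hrest, hwu]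
  · rintro _ ⟨u, hu, rfl⟩
    obtain ⟨v, hv⟩ := wordSet_nonempty (n := m + 2) (by omega)
    refine ⟨u ++ v, Or.inl ⟨u, hu, v, hv, rfl⟩, ?_⟩
    rw [List.take_append_of_le_length (by rw [length_of_mem_wordSet hu]; omega)]

theorem image_take_wordSet_succ {n : ℕ} (hn : 1 ≤ n) :
    List.take (Nat.fib n - 1) '' wordSet (n + 1) = List.take (Nat.fib n - 1) '' wordSet n := by
  have pair : ∀ m, List.take (Nat.fib (m + 1) - 1) '' wordSet (m + 2) =
        List.take (Nat.fib (m + 1) - 1) '' wordSet (m + 1) ∧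
      List.take (Nat.fib (m + 2) - 1) '' wordSet (m + 3) =
        List.take (Nat.fib (m + 2) - 1) '' wordSet (m + 2) := by
    intro m
    induction m with
    | zero =>
      exact ⟨(image_take_zero_wordSet (by omega)).trans (image_take_zero_wordSet le_rfl).symm,
        (image_take_zero_wordSet (by omega)).trans (image_take_zero_wordSet (by omega)).symm⟩
    | succ m ih => exact ⟨ih.2, image_take_wordSet_add_four ih.1 ih.2⟩
  obtain ⟨m, rfl⟩ := Nat.exists_eq_add_of_le' hn
  exact (pair m).1

theorem stmt8 (n k : ℕ) (hn : 3 ≤ n) :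
    (fun w : List Bool => w.take (Nat.fib n - 1)) '' wordSet n =
      (fun w : List Bool => w.take (Nat.fib n - 1)) '' wordSet (n + k) := by
  induction k with
  | zero => rfl
  | succ k ih =>
    have hle : Nat.fib n - 1 ≤ Nat.fib (n + k) - 1 :=
      Nat.sub_le_sub_right (Nat.fib_mono (by omega)) 1
    exact ih.trans (Set.image_take_eq_of_le hle (image_take_wordSet_succ (by omega))).symm
end

section
/- For all n ≥ 4 and k ≥ 1, the set of factors of length f_n of words in A_{n+1} equals the set of factors of length f_n of words in A_{n+k}. -/
/-!
A word of `A_{m+3}` is `uv` with `u, v` from `A_{m+1}` and `A_{m+2}` in some order. By induction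
on `m`, a prefix of length `< f_j` of a word of `A_m` is already a prefix of a word of `A_j`, and
by reversal symmetry the same holds for suffixes. A factor of length `f_n` of `uv ∈ A_m`,
`m ≥ n + 2`, lies inside `u` or `v` (induction), or straddles the cut as `s ++ p`. Since
`f_n = f_{n-1} + f_{n-2}` with `f_{n-2} < f_{n-1}` (this needs `n ≥ 4`), `s` or `p` is shorter than
`f_{n-1}`, so `s ++ p` occurs in a word of `A_{n-1}A_n` or `A_nA_{n-1}`, both inside `A_{n+1}`.
Conversely every word of `A_m` is a prefix of a word of `A_{m+1}`.
-/

open Nat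

theorem append_mem_wordSet_add_two {i : ℕ} (hi : 1 ≤ i) {u v : List Bool}
    (hu : u ∈ wordSet (i + 1)) (hv : v ∈ wordSet i) : u ++ v ∈ wordSet (i + 2) := by
  obtain ⟨i, rfl⟩ := Nat.exists_eq_add_of_le' hi
  exact Or.inl ⟨u, hu, v, hv, rfl⟩

theorem append_mem_wordSet_add_two' {i : ℕ} (hi : 1 ≤ i) {u v : List Bool}
    (hu : u ∈ wordSet i) (hv : v ∈ wordSet (i + 1)) : u ++ v ∈ wordSet (i + 2) := by
  obtain ⟨i, rfl⟩ := Nat.exists_eq_add_of_le' hi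
  exact Or.inr ⟨u, hu, v, hv, rfl⟩

theorem exists_append_of_mem_wordSet_add_three {k : ℕ} {w : List Bool}
    (hw : w ∈ wordSet (k + 3)) :
    ∃ a b u v, u ∈ wordSet a ∧ v ∈ wordSet b ∧ w = u ++ v ∧
      k + 1 ≤ a ∧ k + 1 ≤ b ∧ a + b = 2 * k + 3 := by
  rcases hw with ⟨u, hu, v, hv, rfl⟩ | ⟨u, hu, v, hv, rfl⟩
  · exact ⟨_, _, u, v, hu, hv, rfl, by omega, by omega, by omega⟩
  · exact ⟨_, _, u, v, hu, hv, rfl, by omega, by omega, by omega⟩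

theorem length_of_mem_wordSet_s11 : ∀ {m : ℕ} {w : List Bool}, w ∈ wordSet m → w.length = fib m
  | 0, _, hw => (Set.notMem_empty _ hw).elim
  | 1, _, rfl => rfl
  | 2, _, rfl => rfl
  | m + 3, _, hw => by
    have hfib : fib (m + 3) = fib (m + 1) + fib (m + 2) := Nat.fib_add_two
    rcases hw with ⟨u, hu, v, hv, rfl⟩ | ⟨u, hu, v, hv, rfl⟩ <;>
      rw [List.length_append, length_of_mem_wordSet_s11 hu, length_of_mem_wordSet_s11 hv] <;> omega

theorem wordSet_nonempty_s11 : ∀ {m : ℕ}, 1 ≤ m → (wordSet m).Nonempty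
  | 1, _ => ⟨_, rfl⟩
  | 2, _ => ⟨_, rfl⟩
  | m + 3, _ =>
    let ⟨u, hu⟩ := wordSet_nonempty_s11 (m := m + 2) (by omega)
    let ⟨v, hv⟩ := wordSet_nonempty_s11 (m := m + 1) (by omega)
    ⟨u ++ v, append_mem_wordSet_add_two (by omega) hu hv⟩

theorem reverse_mem_wordSet : ∀ {m : ℕ} {w : List Bool}, w ∈ wordSet m → w.reverse ∈ wordSet m
  | 0, _, hw => hw
  | 1, _, rfl => rfl
  | 2, _, rfl => rfl
  | m + 3, _, hw => by
    rcases hw with ⟨u, hu, v, hv, rfl⟩ | ⟨u, hu, v, hv, rfl⟩ <;> rw [List.reverse_append]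
    · exact append_mem_wordSet_add_two' (by omega) (reverse_mem_wordSet hv)
        (reverse_mem_wordSet hu)
    · exact append_mem_wordSet_add_two (by omega) (reverse_mem_wordSet hv)
        (reverse_mem_wordSet hu)

theorem exists_prefix_mem_wordSet_succ {m : ℕ} (hm : 2 ≤ m) {w : List Bool}
    (hw : w ∈ wordSet m) : ∃ w' ∈ wordSet (m + 1), w <+: w' := by
  obtain ⟨i, rfl⟩ : ∃ i, m = i + 1 := ⟨m - 1, by omega⟩
  obtain ⟨v, hv⟩ := wordSet_nonempty_s11 (m := i) (by omega)
  exact ⟨w ++ v, append_mem_wordSet_add_two (by omega) hw hv, List.prefix_append w v⟩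

theorem exists_mem_wordSet_of_isPrefix {m j : ℕ} {w p : List Bool} (hw : w ∈ wordSet m)
    (hpw : p <+: w) (hj : 1 ≤ j) (hjm : j ≤ m) (hp : p.length < fib j) :
    ∃ β ∈ wordSet j, p <+: β := by
  induction m using Nat.strong_induction_on generalizing j w p with
  | _ m ih =>
  rcases hjm.eq_or_lt with rfl | hjm
  · exact ⟨w, hw, hpw⟩
  rcases eq_or_ne p [] with rfl | hpne
  · obtain ⟨β, hβ⟩ := wordSet_nonempty_s11 hj
    exact ⟨β, hβ, List.nil_prefix⟩
  have hj3 : 3 ≤ j := by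
    have := List.length_pos_iff.mpr hpne
    by_contra
    interval_cases j <;> simp_all
  obtain ⟨k, rfl⟩ : ∃ k, m = k + 3 := ⟨m - 3, by omega⟩
  obtain ⟨a, b, u, v, hu, hv, rfl, ha, hb, hab⟩ := exists_append_of_mem_wordSet_add_three hw
  obtain ⟨t, ht⟩ := hpw
  rcases List.append_eq_append_iff.mp ht with ⟨t', rfl, -⟩ | ⟨q, rfl, rfl⟩
  · by_cases haj : j ≤ a
    · exact ih a (by omega) hu (List.prefix_append p t') hj haj hp
    obtain ⟨w', hw', huw'⟩ := exists_prefix_mem_wordSet_succ (by omega) hu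
    obtain rfl : j = a + 1 := by omega
    exact ⟨w', hw', (List.prefix_append p t').trans huw'⟩
  -- `p` overruns `u`, so `u ∈ A_{j-1}` and the overhang, shorter than `f_{j-2}`, reduces to `A_{j-2}`
  · have hlen : fib a + q.length < fib j := by
      rwa [List.length_append, length_of_mem_wordSet_s11 hu] at hp
    have haj : a < j := lt_of_not_ge fun h => by linarith [Nat.fib_mono h]
    obtain ⟨rfl, rfl, rfl⟩ : a = k + 1 ∧ j = k + 2 ∧ b = k + 2 := by omega
    have hfib : fib (k + 2) = fib k + fib (k + 1) := Nat.fib_add_two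
    obtain ⟨β, hβ, hqβ⟩ :=
      ih (k + 2) (by omega) (j := k) hv (List.prefix_append q t) (by omega) (by omega) (by omega)
    exact ⟨u ++ β, append_mem_wordSet_add_two (by omega) hu hβ,
      (List.prefix_append_right_inj u).mpr hqβ⟩

theorem exists_mem_wordSet_of_isSuffix {m j : ℕ} {w s : List Bool} (hw : w ∈ wordSet m)
    (hsw : s <:+ w) (hj : 1 ≤ j) (hjm : j ≤ m) (hs : s.length < fib j) :
    ∃ α ∈ wordSet j, s <:+ α := by
  obtain ⟨β, hβ, hsβ⟩ := exists_mem_wordSet_of_isPrefix (reverse_mem_wordSet hw)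
    (List.reverse_prefix.mpr hsw) hj hjm (by simpa using hs)
  exact ⟨β.reverse, reverse_mem_wordSet hβ, List.reverse_prefix.mp (by simpa using hsβ)⟩

theorem factorSet_wordSet_subset_succ {m L : ℕ} (hm : 2 ≤ m) :
    factorSet (wordSet m) L ⊆ factorSet (wordSet (m + 1)) L := by
  rintro x ⟨hx, w, hw, hxw⟩
  obtain ⟨w', hw', hww'⟩ := exists_prefix_mem_wordSet_succ hm hw
  exact ⟨hx, w', hw', hxw.trans hww'.isInfix⟩

theorem factorSet_wordSet_mono {m m' L : ℕ} (hm : 2 ≤ m) (hmm' : m ≤ m') :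
    factorSet (wordSet m) L ⊆ factorSet (wordSet m') L := by
  induction m', hmm' using Nat.le_induction with
  | base => rfl
  | succ m' hmm' ih => exact ih.trans (factorSet_wordSet_subset_succ (hm.trans hmm'))

theorem append_mem_factorSet_of_isSuffix_of_isPrefix {j a b : ℕ} {s p u v : List Bool}
    (hj : 2 ≤ j) (hu : u ∈ wordSet a) (hv : v ∈ wordSet b) (ha : j + 2 ≤ a) (hb : j + 2 ≤ b)
    (hsu : s <:+ u) (hpv : p <+: v) (hs : s ≠ []) (hp : p ≠ [])
    (hsp : (s ++ p).length = fib (j + 2)) :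
    s ++ p ∈ factorSet (wordSet (j + 3)) (fib (j + 2)) := by
  have hfib : fib (j + 2) = fib j + fib (j + 1) := Nat.fib_add_two
  have hfib_lt : fib j < fib (j + 1) := Nat.fib_lt_fib_succ hj
  have hs1 := List.length_pos_iff.mpr hs
  have hp1 := List.length_pos_iff.mpr hp
  rw [List.length_append] at hsp
  refine ⟨by rw [List.length_append, hsp], ?_⟩
  rcases lt_or_ge s.length (fib (j + 1)) with hs' | hp'
  · obtain ⟨α, hα, hsα⟩ := exists_mem_wordSet_of_isSuffix hu hsu (by omega) (by omega) hs'
    obtain ⟨β, hβ, hpβ⟩ := exists_mem_wordSet_of_isPrefix hv hpv (by omega) hb (by omega)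
    exact ⟨α ++ β, append_mem_wordSet_add_two' (i := j + 1) (by omega) hα hβ,
      List.infix_append_iff.mpr (.inr (.inr ⟨s, p, rfl, hsα, hpβ⟩))⟩
  · obtain ⟨α, hα, hsα⟩ := exists_mem_wordSet_of_isSuffix hu hsu (by omega) ha (by omega)
    obtain ⟨β, hβ, hpβ⟩ :=
      exists_mem_wordSet_of_isPrefix (j := j + 1) hv hpv (by omega) (by omega) (by omega)
    exact ⟨α ++ β, append_mem_wordSet_add_two (i := j + 1) (by omega) hα hβ,
      List.infix_append_iff.mpr (.inr (.inr ⟨s, p, rfl, hsα, hpβ⟩))⟩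

theorem factorSet_wordSet_subset_factorSet_succ {n m : ℕ} (hn : 4 ≤ n) (hnm : n ≤ m) :
    factorSet (wordSet m) (fib n) ⊆ factorSet (wordSet (n + 1)) (fib n) := by
  obtain ⟨j, rfl⟩ : ∃ j, n = j + 2 := ⟨n - 2, by omega⟩
  induction m using Nat.strong_induction_on with
  | _ m ih =>
  rcases hnm.eq_or_lt with rfl | hlt
  · exact factorSet_wordSet_subset_succ (by omega)
  rcases (Nat.succ_le_of_lt hlt).eq_or_lt with rfl | hlt
  · rfl
  rintro x ⟨hx, w, hw, hxw⟩
  obtain ⟨k, rfl⟩ : ∃ k, m = k + 3 := ⟨m - 3, by omega⟩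
  obtain ⟨a, b, u, v, hu, hv, rfl, ha, hb, hab⟩ := exists_append_of_mem_wordSet_add_three hw
  rcases List.infix_append_iff_ne_nil.mp hxw with hxu | hxv | ⟨s, p, hs, hp, rfl, hsu, hpv⟩
  · exact ih a (by omega) (by omega) ⟨hx, u, hu, hxu⟩
  · exact ih b (by omega) (by omega) ⟨hx, v, hv, hxv⟩
  · exact append_mem_factorSet_of_isSuffix_of_isPrefix (by omega) hu hv (by omega) (by omega)
      hsu hpv hs hp hx

theorem stmt11 (n k : ℕ) (hn : 4 ≤ n) (hk : 1 ≤ k) :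
    factorSet (wordSet (n + 1)) (Nat.fib n) = factorSet (wordSet (n + k)) (Nat.fib n) :=
  (factorSet_wordSet_mono (by omega) (by omega)).antisymm
    (factorSet_wordSet_subset_factorSet_succ hn (by omega))
end
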